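/- Let X be a decomposable continuum with the property of Kelley. For every proper subcontinuum L of X, there exists a closed set A ∈ NB(F_1(X)) with A ⊆ X \ L. -/

import Mathlib

open Set Metric Filter Topology TopologicalSpace

/-- A subcontinuum: a nonempty compact connected subset. -/
def IsSubcontinuum {X : Type*} [TopologicalSpace X] (K : Set X) : Prop :=
  IsCompact K ∧ IsConnected K

/-- `kappa A B` : the union of all subcontinua meeting `B` and avoiding `A`. -/
def kappa {X : Type*} [TopologicalSpace X] (A B : Set X) : Set X :=
  ⋃₀ {L | IsSubcontinuum L ∧ (L ∩ B).Nonempty ∧ L ⊆ Aᶜ}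

/-- A continuum is decomposable if it is the union of two proper subcontinua. -/
def Decomposable (X : Type*) [TopologicalSpace X] : Prop :=
  ∃ M N : Set X, IsSubcontinuum M ∧ IsSubcontinuum N ∧
    M ≠ univ ∧ N ≠ univ ∧ M ∪ N = univ

/-- The property of Kelley. -/
def KelleyProp (X : Type*) [MetricSpace X] : Prop :=
  ∀ (x : ℕ → X) (x₀ : X), Tendsto x atTop (𝓝 x₀) →
    ∀ A : Set X, IsSubcontinuum A → x₀ ∈ A →
      ∃ B : ℕ → Set X, (∀ n, IsSubcontinuum (B n) ∧ x n ∈ B n) ∧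
        Tendsto (fun n => hausdorffDist (B n) A) atTop (𝓝 0)

/-- The hyperspace of nonblockers of `F₁(X)`, as a subset of the hyperspace of
nonempty compact subsets of `X` with the Hausdorff metric. -/
def NB (X : Type*) [MetricSpace X] : Set (NonemptyCompacts X) :=
  {A | ∀ x ∉ (A : Set X), Dense (kappa (A : Set X) ({x} : Set X))}

/-- The minimal nonblocker containing `x` (equal to `X` if `x` lies in no nonblocker). -/
def piSet (X : Type*) [MetricSpace X] (x : X) : Set X :=
  ⋂ A ∈ {A ∈ NB X | x ∈ (A : Set X)}, (A : Set X)

/-!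
Enlarge `L` to a proper subcontinuum `K₀` with nonempty interior (decomposability). In a Kelley
continuum such a subcontinuum `K` can be enlarged to a proper subcontinuum `K'` with
`K ⊆ interior K'` that meets any prescribed nonempty open set: boundary bumping brings a
continuum `C ⊇ K` up to the closure of the open set, and the Kelley property lets one thicken
`C` uniformly, the pieces being glued to `C` through a ball inside `C`. Running through a
countable basis gives `K₀ ⊆ K₁ ⊆ ⋯` whose union `G` is open, dense and proper, and any two points
of `G` lie in a common `Kₙ ⊆ G`; hence `A = X \ G` does not block `F₁(X)` and misses `L`.
-/

section BoundaryBumping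

variable {Y : Type*} [TopologicalSpace Y] [CompactSpace Y]

theorem exists_isClopen_mem_subset_of_connectedComponent_subset [T2Space Y] {x : Y} {U : Set Y}
    (hU : IsOpen U) (h : connectedComponent x ⊆ U) : ∃ Z, IsClopen Z ∧ x ∈ Z ∧ Z ⊆ U := by
  let ι := {s : Set Y // IsClopen s ∧ x ∈ s}
  have : Nonempty ι := ⟨⟨univ, isClopen_univ, mem_univ x⟩⟩
  have hdir : Directed (· ⊇ ·) (fun s : ι => (s : Set Y)) := fun s t =>
    ⟨⟨s ∩ t, s.2.1.inter t.2.1, s.2.2, t.2.2⟩, inter_subset_left, inter_subset_right⟩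
  obtain ⟨⟨Z, hZ, hxZ⟩, hZU⟩ :=
    exists_subset_nhds_of_compactSpace hdir (fun s => s.2.1.isClosed) fun y hy =>
      hU.mem_nhds (h ((connectedComponent_eq_iInter_isClopen x).symm ▸ hy))
  exact ⟨Z, hZ, hxZ, hZU⟩

theorem IsClosed.isSubcontinuum_connectedComponentIn {E : Set Y} (hE : IsClosed E) {x : Y}
    (hx : x ∈ E) : IsSubcontinuum (connectedComponentIn E x) := by
  refine ⟨IsClosed.isCompact ?_, isConnected_connectedComponentIn_iff.2 hx⟩
  rw [connectedComponentIn_eq_image hx]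
  exact hE.isClosedEmbedding_subtypeVal.isClosedMap _ isClosed_connectedComponent

/-- Boundary bumping. -/
theorem IsClosed.connectedComponentIn_inter_closure_compl_nonempty [T2Space Y] [ConnectedSpace Y]
    {E : Set Y} (hE : IsClosed E) (hE_ne : E ≠ univ) {x : Y} (hx : x ∈ E) :
    (connectedComponentIn E x ∩ closure Eᶜ).Nonempty := by
  by_contra h
  have hC : connectedComponentIn E x ⊆ interior E := fun y hy => by
    rw [← compl_compl (interior E), ← closure_compl]
    exact fun hy' => h ⟨y, hy, hy'⟩
  have : CompactSpace E := isCompact_iff_compactSpace.mp hE.isCompact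
  obtain ⟨Z, hZ, hxZ, hZE⟩ := exists_isClopen_mem_subset_of_connectedComponent_subset
    (x := (⟨x, hx⟩ : E)) (isOpen_interior.preimage continuous_subtype_val) fun z hz =>
      hC (connectedComponentIn_eq_image hx ▸ mem_image_of_mem _ hz)
  obtain ⟨O, hO, hOZ⟩ := isOpen_induced_iff.mp hZ.isOpen
  -- A clopen subset of `E` lying in `interior E` is clopen in `Y`.
  have hZ_eq : ((↑) '' Z : Set Y) = O ∩ interior E := by
    refine subset_antisymm ?_ ?_
    · rintro _ ⟨z, hz, rfl⟩
      exact ⟨(hOZ ▸ hz : z ∈ Subtype.val ⁻¹' O), hZE hz⟩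
    · rintro y ⟨hyO, hyE⟩
      exact ⟨⟨y, interior_subset hyE⟩, hOZ ▸ hyO, rfl⟩
  have hZY : IsClopen ((↑) '' Z : Set Y) :=
    ⟨hE.isClosedEmbedding_subtypeVal.isClosedMap _ hZ.isClosed, hZ_eq ▸ hO.inter isOpen_interior⟩
  rcases isClopen_iff.mp hZY with h0 | h1
  · exact (h0 ▸ mem_image_of_mem _ hxZ : x ∈ (∅ : Set Y))
  · exact hE_ne (eq_univ_of_univ_subset (h1 ▸ image_subset_iff.2 fun z _ => z.2))

theorem IsSubcontinuum.exists_superset_inter_closure_nonempty [T2Space Y] [ConnectedSpace Y]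
    {K : Set Y} (hK : IsSubcontinuum K) (hK_ne : K ≠ univ) {U : Set Y} (hU : IsOpen U)
    (hU_ne : U.Nonempty) :
    ∃ C, IsSubcontinuum C ∧ K ⊆ C ∧ C ≠ univ ∧ (C ∩ closure U).Nonempty := by
  by_cases hKU : (K ∩ U).Nonempty
  · exact ⟨K, hK, subset_rfl, hK_ne, hKU.mono (inter_subset_inter_right _ subset_closure)⟩
  obtain ⟨x, hx⟩ := hK.2.nonempty
  have hKU' : K ⊆ Uᶜ := fun y hy hyU => hKU ⟨y, hy, hyU⟩
  refine ⟨connectedComponentIn Uᶜ x,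
    hU.isClosed_compl.isSubcontinuum_connectedComponentIn (hKU' hx),
    hK.2.isPreconnected.subset_connectedComponentIn hx hKU', fun h => ?_, ?_⟩
  · exact compl_ne_univ.2 hU_ne (eq_univ_of_univ_subset (h ▸ connectedComponentIn_subset _ _))
  · simpa only [compl_compl] using
      hU.isClosed_compl.connectedComponentIn_inter_closure_compl_nonempty
        (compl_ne_univ.2 hU_ne) (hKU' hx)

end BoundaryBumping

namespace KelleyProp

variable {X : Type*} [MetricSpace X]

theorem exists_thickening (hkel : KelleyProp X) {C : Set X} (hC : IsSubcontinuum C) {ε : ℝ}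
    (hε : 0 < ε) :
    ∃ δ > 0, ∀ y ∈ thickening δ C, ∃ B, IsSubcontinuum B ∧ y ∈ B ∧ hausdorffDist B C < ε := by
  have hnhds : ∀ᶠ y in 𝓝ˢ C, ∃ B, IsSubcontinuum B ∧ y ∈ B ∧ hausdorffDist B C < ε := by
    refine eventually_nhdsSet_iff_forall.2 fun y₀ hy₀ => eventually_iff_seq_eventually.2 ?_
    intro y hy
    obtain ⟨B, hB, hBC⟩ := hkel y y₀ hy C hC hy₀
    exact (hBC.eventually (gt_mem_nhds hε)).mono fun n hn => ⟨B n, (hB n).1, (hB n).2, hn⟩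
  obtain ⟨U, hU, hCU, hUB⟩ := mem_nhdsSet_iff_exists.1 hnhds
  obtain ⟨δ, hδ, hδU⟩ := hC.1.exists_thickening_subset_open hU hCU
  exact ⟨δ, hδ, fun y hy => hUB (hδU hy)⟩

theorem exists_subcontinuum_subset_interior [CompactSpace X] (hkel : KelleyProp X) {C : Set X}
    (hC : IsSubcontinuum C) (hC_int : (interior C).Nonempty) {V : Set X} (hV : IsOpen V)
    (hCV : C ⊆ V) : ∃ K, IsSubcontinuum K ∧ C ⊆ interior K ∧ K ⊆ V := by
  obtain ⟨u, hu⟩ := hC_int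
  obtain ⟨r, hr, hball⟩ := Metric.isOpen_iff.1 isOpen_interior u hu
  obtain ⟨ε, hε, hεV⟩ := hC.1.exists_cthickening_subset_open hV hCV
  obtain ⟨δ, hδ, hB⟩ := hkel.exists_thickening hC (lt_min hε hr)
  choose! B hB hyB hBC using hB
  have hfin : ∀ y ∈ thickening δ C, hausdorffEDist (B y) C ≠ ⊤ := fun y hy =>
    hausdorffEDist_ne_top_of_nonempty_of_bounded (hB y hy).2.nonempty hC.2.nonempty
      isBounded_of_compactSpace isBounded_of_compactSpace
  have hB_sub : ∀ y ∈ thickening δ C, B y ⊆ cthickening ε C := fun y hy b hb => by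
    obtain ⟨c, hc, hbc⟩ := exists_dist_lt_of_hausdorffDist_lt hb (hBC y hy) (hfin y hy)
    exact thickening_subset_cthickening ε C
      (mem_thickening_iff.2 ⟨c, hc, hbc.trans_le (min_le_left _ _)⟩)
  -- Each `B y` passes within `r` of `u`, hence through the ball `ball u r ⊆ C`.
  have hB_meet : ∀ y ∈ thickening δ C, (C ∩ B y).Nonempty := fun y hy => by
    obtain ⟨b, hb, hbu⟩ := exists_dist_lt_of_hausdorffDist_lt' (interior_subset hu) (hBC y hy)
      (hfin y hy)
    exact ⟨b, interior_subset (hball (hbu.trans_le (min_le_right _ _))), hb⟩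
  set S := ⋃ y ∈ thickening δ C, C ∪ B y
  have hCS : C ⊆ S := fun c hc =>
    mem_biUnion (self_subset_thickening hδ C hc) (mem_union_left _ hc)
  have hS : IsPreconnected S := by
    refine isPreconnected_of_forall u fun y hy => ?_
    obtain ⟨z, hz, hyz⟩ := mem_iUnion₂.1 hy
    exact ⟨C ∪ B z, subset_biUnion_of_mem (u := fun y => C ∪ B y) hz,
      Or.inl (interior_subset hu), hyz,
      hC.2.isPreconnected.union' (hB_meet z hz) (hB z hz).2.isPreconnected⟩
  refine ⟨closure S, ⟨isClosed_closure.isCompact, ⟨u, subset_closure (hCS (interior_subset hu))⟩,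
    hS.closure⟩, ?_, ?_⟩
  · refine (self_subset_thickening hδ C).trans (interior_maximal ?_ isOpen_thickening)
    exact fun y hy => subset_closure (mem_biUnion hy (mem_union_right _ (hyB y hy)))
  · refine (closure_minimal ?_ isClosed_cthickening).trans hεV
    exact iUnion₂_subset fun y hy => union_subset (self_subset_cthickening C) (hB_sub y hy)

theorem exists_subcontinuum_subset_interior_ne_univ_inter_nonempty [CompactSpace X]
    [ConnectedSpace X] (hkel : KelleyProp X)
    {K : Set X} (hK : IsSubcontinuum K) (hK_int : (interior K).Nonempty) (hK_ne : K ≠ univ)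
    {U : Set X} (hU : IsOpen U) (hU_ne : U.Nonempty) :
    ∃ K', IsSubcontinuum K' ∧ K ⊆ interior K' ∧ K' ≠ univ ∧ (K' ∩ U).Nonempty := by
  obtain ⟨C, hC, hKC, hC_ne, z, hzC, hzU⟩ :=
    hK.exists_superset_inter_closure_nonempty hK_ne hU hU_ne
  obtain ⟨q, hq⟩ := nonempty_compl.2 hC_ne
  obtain ⟨K', hK', hCK', hK'q⟩ := hkel.exists_subcontinuum_subset_interior hC
    (hK_int.mono (interior_mono hKC)) isOpen_compl_singleton (subset_compl_singleton_iff.2 hq)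
  obtain ⟨w, hwK', hwU⟩ := mem_closure_iff.1 hzU _ isOpen_interior (hCK' hzC)
  exact ⟨K', hK', hKC.trans hCK', fun h => hK'q (h ▸ mem_univ q) rfl, w, interior_subset hwK', hwU⟩

end KelleyProp

theorem Decomposable.exists_subcontinuum_superset {X : Type*} [TopologicalSpace X] [T2Space X]
    (hdec : Decomposable X) {L : Set X} (hL : IsSubcontinuum L) (hL_ne : L ≠ univ) :
    ∃ W, IsSubcontinuum W ∧ L ⊆ W ∧ W ≠ univ ∧ (interior W).Nonempty := by
  obtain ⟨M, N, hM, hN, hM_ne, hN_ne, hMN⟩ := hdec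
  have hint : ∀ {S T : Set X}, IsSubcontinuum S → S ≠ univ → Sᶜ ⊆ T → (interior T).Nonempty :=
    fun hS hS_ne hST =>
      (nonempty_compl.2 hS_ne).mono (interior_maximal hST hS.1.isClosed.isOpen_compl)
  have hMN' : Mᶜ ⊆ N := compl_subset_iff_union.2 hMN
  by_cases hLM : (L ∩ M).Nonempty
  · by_cases hLM_univ : L ∪ M = univ
    · exact ⟨L, hL, subset_rfl, hL_ne,
        hint hM hM_ne (compl_subset_iff_union.2 (union_comm L M ▸ hLM_univ))⟩
    · exact ⟨L ∪ M, ⟨hL.1.union hM.1, hL.2.union hLM hM.2⟩, subset_union_left, hLM_univ,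
        hint hN hN_ne ((compl_subset_iff_union.2 (union_comm M N ▸ hMN)).trans subset_union_right)⟩
  · have hLM' : L ⊆ Mᶜ := fun x hx hxM => hLM ⟨x, hx, hxM⟩
    exact ⟨N, hN, hLM'.trans hMN', hN_ne, hint hM hM_ne hMN'⟩

section Exhaustion

variable {X : Type*} [TopologicalSpace X]

theorem exists_seq_subset_interior_succ_dense_iUnion [SecondCountableTopology X] [Nonempty X]
    {P : Set X → Prop} (hP : ∀ K, P K → ∀ U, IsOpen U → U.Nonempty →
      ∃ K', P K' ∧ K ⊆ interior K' ∧ (K' ∩ U).Nonempty)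
    {K₀ : Set X} (h₀ : P K₀) :
    ∃ K : ℕ → Set X, K 0 = K₀ ∧ (∀ n, P (K n)) ∧ (∀ n, K n ⊆ interior (K (n + 1))) ∧
      Dense (⋃ n, K n) := by
  obtain ⟨b, hb_count, hb_empty, hb⟩ := exists_countable_basis X
  -- `univ` is added only to make the enumerated family nonempty.
  obtain ⟨e, he⟩ := (hb_count.insert univ).exists_eq_range (insert_nonempty _ _)
  have he_mem : ∀ n, e n ∈ insert univ b := fun n => he ▸ mem_range_self n
  have he_open : ∀ n, IsOpen (e n) := fun n =>
    (he_mem n).elim (fun h => h ▸ isOpen_univ) hb.isOpen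
  have he_ne : ∀ n, (e n).Nonempty := fun n =>
    (he_mem n).elim (fun h => h ▸ univ_nonempty) fun h =>
      nonempty_iff_ne_empty.2 fun h' => hb_empty (h' ▸ h)
  choose! next hnextP hnext_sub hnext_meet using
    fun K (hK : P K) n => hP K hK (e n) (he_open n) (he_ne n)
  let K : ℕ → Set X := fun n => Nat.rec K₀ (fun n Kn => next Kn n) n
  have hKP : ∀ n, P (K n) := fun n => Nat.rec h₀ (fun n ih => hnextP _ ih n) n
  refine ⟨K, rfl, hKP, fun n => hnext_sub _ (hKP n) n, hb.dense_iff.2 fun o ho ho_ne => ?_⟩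
  obtain ⟨n, rfl⟩ : o ∈ range e := he ▸ mem_insert_of_mem _ ho
  obtain ⟨y, hyK, hyo⟩ := hnext_meet _ (hKP n) n
  exact ⟨y, hyo, mem_iUnion_of_mem (n + 1) hyK⟩

variable {K : ℕ → Set X}

theorem isOpen_iUnion_of_subset_interior_succ (hK : ∀ n, K n ⊆ interior (K (n + 1))) :
    IsOpen (⋃ n, K n) := by
  have : ⋃ n, K n = ⋃ n, interior (K (n + 1)) :=
    subset_antisymm (iUnion_mono' fun n => ⟨n, hK n⟩)
      (iUnion_mono' fun n => ⟨n + 1, interior_subset⟩)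
  exact this ▸ isOpen_iUnion fun _ => isOpen_interior

theorem compl_iUnion_nonempty_of_subset_interior_succ [CompactSpace X]
    (hK : ∀ n, K n ⊆ interior (K (n + 1))) (hK_ne : ∀ n, K n ≠ univ) :
    (⋃ n, K n)ᶜ.Nonempty := by
  obtain ⟨x, hx⟩ := IsCompact.nonempty_iInter_of_sequence_nonempty_isCompact_isClosed
    (fun n => (interior (K (n + 1)))ᶜ)
    (fun n => compl_subset_compl.2 (interior_subset.trans (hK (n + 1))))
    (fun n => nonempty_compl.2 fun h =>
      hK_ne (n + 1) (eq_univ_of_univ_subset (h.ge.trans interior_subset)))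
    isOpen_interior.isClosed_compl.isCompact (fun _ => isOpen_interior.isClosed_compl)
  refine ⟨x, fun hx' => ?_⟩
  obtain ⟨n, hn⟩ := mem_iUnion.1 hx'
  exact mem_iInter.1 hx n (hK n hn)

end Exhaustion

theorem compl_mem_NB {X : Type*} [MetricSpace X] [CompactSpace X] {G : Set X} (hG : IsOpen G)
    (hG_ne : Gᶜ.Nonempty) (hG_dense : Dense G)
    (hG_chain : ∀ x ∈ G, ∀ y ∈ G, ∃ C, IsSubcontinuum C ∧ x ∈ C ∧ y ∈ C ∧ C ⊆ G) :
    (⟨⟨Gᶜ, hG.isClosed_compl.isCompact⟩, hG_ne⟩ : NonemptyCompacts X) ∈ NB X := by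
  intro x hx
  refine hG_dense.mono fun y hy => ?_
  obtain ⟨C, hC, hxC, hyC, hCG⟩ := hG_chain x (not_not.1 hx) y hy
  exact mem_sUnion_of_mem hyC ⟨hC, ⟨x, hxC, rfl⟩, (compl_compl G).symm ▸ hCG⟩

theorem stmt_1_general {X : Type*} [MetricSpace X] [CompactSpace X] [ConnectedSpace X]
    (hdec : Decomposable X) (hkel : KelleyProp X)
    (L : Set X) (hL : IsSubcontinuum L) (hLproper : L ≠ univ) :
    ∃ A ∈ NB X, (A : Set X) ⊆ Lᶜ := by
  obtain ⟨W, hW, hLW, hW_ne, hW_int⟩ := hdec.exists_subcontinuum_superset hL hLproper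
  obtain ⟨K, rfl, hKP, hK_succ, hK_dense⟩ := exists_seq_subset_interior_succ_dense_iUnion
    (P := fun K => IsSubcontinuum K ∧ (interior K).Nonempty ∧ K ≠ univ)
    (fun K ⟨hK, hK_int, hK_ne⟩ U hU hU_ne => by
      obtain ⟨K', hK', hKK', hK'_ne, hK'U⟩ :=
        hkel.exists_subcontinuum_subset_interior_ne_univ_inter_nonempty hK hK_int hK_ne hU hU_ne
      exact ⟨K', ⟨hK', hK.2.nonempty.mono hKK', hK'_ne⟩, hKK', hK'U⟩)
    ⟨hW, hW_int, hW_ne⟩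
  have hK_mono : Monotone K := monotone_nat_of_le_succ fun n => (hK_succ n).trans interior_subset
  have hG_open := isOpen_iUnion_of_subset_interior_succ hK_succ
  refine ⟨_, compl_mem_NB hG_open
    (compl_iUnion_nonempty_of_subset_interior_succ hK_succ fun n => (hKP n).2.2) hK_dense ?_,
    compl_subset_compl.2 (hLW.trans (subset_iUnion K 0))⟩
  intro x hx y hy
  obtain ⟨m, hm⟩ := mem_iUnion.1 hx
  obtain ⟨n, hn⟩ := mem_iUnion.1 hy
  exact ⟨K (max m n), (hKP _).1, hK_mono (le_max_left m n) hm, hK_mono (le_max_right m n) hn,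
    subset_iUnion K _⟩

theorem stmt_1 {X : Type*} [MetricSpace X] [CompactSpace X] [ConnectedSpace X] [Nonempty X]
    (hdec : Decomposable X) (hkel : KelleyProp X)
    (L : Set X) (hL : IsSubcontinuum L) (hLproper : L ≠ univ) :
    ∃ A ∈ NB X, (A : Set X) ⊆ Lᶜ :=
  stmt_1_general hdec hkel L hL hLproper
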